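/- arXiv:2405.11418 — 2 statements merged into one kernel-verified Lean document; each statement's English description precedes it below -/
import Mathlib

section
/- Soundness of CL_LI: every formula of Φ_CL_LI derivable in the axiomatic system for CL_LI is valid, i.e., for every φ ∈ Φ_CL_LI, if ⊢_CL_LI φ then ⊨ φ. -/
open scoped Classical

/-- Graph-inclusion between joint actions (represented as partial functions). -/
def subJA {Agt Act : Type} (σ σ' : Agt → Option Act) : Prop :=
  ∀ a x, σ a = some x → σ' a = some x

/-- Restriction of a joint action to a coalition. -/
noncomputable def restrictJA {Agt Act : Type} (σ : Agt → Option Act) (B : Set Agt) :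
    Agt → Option Act :=
  fun a => if a ∈ B then σ a else none

/-- σ_A ⊎ σ_B : keep σ_A on A and σ_B on B − A. -/
noncomputable def uplusJA {Agt Act : Type} (A B : Set Agt) (σA σB : Agt → Option Act) :
    Agt → Option Act :=
  fun a => if a ∈ A then σA a else if a ∈ B then σB a else none

/-- Concurrent game models over agents `Agt` and atomic propositions `AP`.
A joint action of a coalition `A` is represented as a function `Agt → Option Act`
whose domain (the set of agents where it is `some`) is exactly `A`. -/
structure CGM (Agt AP : Type) where
  St : Type
  Act : Type
  st_ne : Nonempty St
  act_ne : Nonempty Act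
  aja : St → Set Agt → Set (Agt → Option Act)
  out : St → (Agt → Option Act) → Set St
  lab : St → Set AP
  aja_ne : ∀ s A, (aja s A).Nonempty
  aja_dom : ∀ s A, ∀ σ ∈ aja s A, ∀ a, (σ a).isSome ↔ a ∈ A
  aja_glue : ∀ s A (σ : Agt → Option Act), A.Nonempty →
      (∀ a, (σ a).isSome ↔ a ∈ A) →
      (σ ∈ aja s A ↔ ∀ a ∈ A, restrictJA σ {a} ∈ aja s {a})
  out_univ : ∀ s, ∀ σ ∈ aja s Set.univ, ∃ t, out s σ = {t}
  out_univ_not : ∀ s (σ : Agt → Option Act), (∀ a, (σ a).isSome) →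
      σ ∉ aja s Set.univ → out s σ = ∅
  out_glue : ∀ s A, A ≠ Set.univ → ∀ σ ∈ aja s A,
      out s σ = {t | ∃ σ' ∈ aja s Set.univ, subJA σ σ' ∧ t ∈ out s σ'}
  out_not : ∀ s A (σ : Agt → Option Act), (∀ a, (σ a).isSome ↔ a ∈ A) →
      A ≠ Set.univ → σ ∉ aja s A → out s σ = ∅

/-- The liability fragment Φ_CL_LI. -/
inductive FormLI (Agt AP : Type) : Type
  | top : FormLI Agt AP
  | bot : FormLI Agt AP
  | atom : AP → FormLI Agt AP
  | natom : AP → FormLI Agt AP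
  | and : FormLI Agt AP → FormLI Agt AP → FormLI Agt AP
  | or : FormLI Agt AP → FormLI Agt AP → FormLI Agt AP
  | box : Set Agt → FormLI Agt AP → FormLI Agt AP

/-- Satisfaction for Φ_CL_LI. -/
def satLI {Agt AP : Type} (M : CGM Agt AP) : M.St → FormLI Agt AP → Prop
  | _, FormLI.top => True
  | _, FormLI.bot => False
  | s, FormLI.atom p => p ∈ M.lab s
  | s, FormLI.natom p => p ∉ M.lab s
  | s, FormLI.and φ ψ => satLI M s φ ∧ satLI M s ψ
  | s, FormLI.or φ ψ => satLI M s φ ∨ satLI M s ψ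
  | s, FormLI.box A φ => ∀ σ ∈ M.aja s A, ∃ t ∈ M.out s σ, satLI M t φ

/-- Validity for Φ_CL_LI. -/
def validLI {Agt AP : Type} (φ : FormLI Agt AP) : Prop :=
  ∀ (M : CGM Agt AP) (s : M.St), satLI M s φ

/-- Propositional evaluation, treating box formulas as atoms (valuation `w`). -/
def evalLI {Agt AP : Type} (v : AP → Prop) (w : FormLI Agt AP → Prop) :
    FormLI Agt AP → Prop
  | FormLI.top => True
  | FormLI.bot => False
  | FormLI.atom p => v p
  | FormLI.natom p => ¬ v p
  | FormLI.and φ ψ => evalLI v w φ ∧ evalLI v w ψ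
  | FormLI.or φ ψ => evalLI v w φ ∨ evalLI v w ψ
  | FormLI.box A φ => w (FormLI.box A φ)

/-- Derivability in the axiomatic system for CL_LI. -/
inductive DerLI {Agt AP : Type} : FormLI Agt AP → Prop
  | r1 (Γ : List (FormLI Agt AP)) (ψ : FormLI Agt AP) :
      (∀ φ ∈ Γ, DerLI φ) →
      (∀ (v : AP → Prop) (w : FormLI Agt AP → Prop),
        (∀ φ ∈ Γ, evalLI v w φ) → evalLI v w ψ) →
      DerLI ψ
  | r2 (A : Set Agt) (φ : FormLI Agt AP) : DerLI φ → DerLI (FormLI.box A φ)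
  | r3 (A B : Set Agt) (φ ψ χ : FormLI Agt AP) : A ∩ B = ∅ →
      DerLI (FormLI.or (FormLI.box (A ∪ B) (FormLI.or φ ψ)) χ) →
      DerLI (FormLI.or (FormLI.box A φ) (FormLI.or (FormLI.box B ψ) χ))

/-- Literals of Φ_CL_LI. -/
inductive IsLitLI {Agt AP : Type} : FormLI Agt AP → Prop
  | atom (p : AP) : IsLitLI (FormLI.atom p)
  | natom (p : AP) : IsLitLI (FormLI.natom p)

/-- Elementary disjunctions (⊥ is the empty disjunction). -/
inductive IsElemDisjLI {Agt AP : Type} : FormLI Agt AP → Prop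
  | bot : IsElemDisjLI FormLI.bot
  | lit {φ : FormLI Agt AP} : IsLitLI φ → IsElemDisjLI φ
  | or {φ ψ : FormLI Agt AP} : IsElemDisjLI φ → IsElemDisjLI ψ →
      IsElemDisjLI (FormLI.or φ ψ)

/-- Finite disjunction of a list of formulas (empty disjunction is ⊥). -/
def bigOrLI {Agt AP : Type} : List (FormLI Agt AP) → FormLI Agt AP
  | [] => FormLI.bot
  | φ :: l => FormLI.or φ (bigOrLI l)

section Aux

variable {Agt AP : Type} [Nonempty Agt]

lemma none_of_not_mem (M : CGM Agt AP) (s : M.St) (A : Set Agt)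
    (σ : Agt → Option M.Act) (hσ : σ ∈ M.aja s A) {a : Agt} (ha : a ∉ A) :
    σ a = none := by
  cases h : σ a with
  | none => rfl
  | some x => exact absurd ((M.aja_dom s A σ hσ a).1 (by rw [h]; rfl)) ha

lemma exists_full_ext (M : CGM Agt AP) (s : M.St) (A : Set Agt)
    (σ : Agt → Option M.Act) (hσ : σ ∈ M.aja s A) :
    ∃ σ' ∈ M.aja s Set.univ, subJA σ σ' := by
  choose τ hτ using fun a => M.aja_ne s ({a} : Set Agt)
  classical
  refine ⟨fun a => if a ∈ A then σ a else τ a a, ?_, ?_⟩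
  · have hdom : ∀ a : Agt,
        ((fun a => if a ∈ A then σ a else τ a a) a).isSome ↔ a ∈ (Set.univ : Set Agt) := by
      intro a
      simp only [Set.mem_univ, iff_true]
      by_cases h : a ∈ A
      · simpa [h] using (M.aja_dom s A σ hσ a).2 h
      · simpa [h] using (M.aja_dom s {a} (τ a) (hτ a) a).2 rfl
    rw [M.aja_glue s Set.univ _ ⟨Classical.arbitrary Agt, trivial⟩ hdom]
    intro a _
    by_cases h : a ∈ A
    · have heq : restrictJA (fun a => if a ∈ A then σ a else τ a a) {a} =
          restrictJA σ {a} := by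
        funext b
        simp only [restrictJA, Set.mem_singleton_iff]
        split
        · next hb => subst hb; simp [h]
        · rfl
      rw [heq]
      exact (M.aja_glue s A σ ⟨a, h⟩ (M.aja_dom s A σ hσ)).mp hσ a h
    · have heq : restrictJA (fun a => if a ∈ A then σ a else τ a a) {a} = τ a := by
        funext b
        simp only [restrictJA, Set.mem_singleton_iff]
        split
        · next hb => subst hb; simp [h]
        · next hb => exact (none_of_not_mem M s {a} (τ a) (hτ a) hb).symm
      rw [heq]; exact hτ a
  · intro a x hax
    have ha : a ∈ A := (M.aja_dom s A σ hσ a).1 (by rw [hax]; rfl)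
    simp [ha, hax]

lemma mem_out_of_sub (M : CGM Agt AP) (s : M.St) (A : Set Agt)
    (σ : Agt → Option M.Act) (hσ : σ ∈ M.aja s A)
    (σ' : Agt → Option M.Act) (hσ' : σ' ∈ M.aja s Set.univ)
    (hsub : subJA σ σ') (t : M.St) (ht : t ∈ M.out s σ') : t ∈ M.out s σ := by
  by_cases hA : A = Set.univ
  · subst hA
    have : σ = σ' := by
      funext a
      have : (σ a).isSome := (M.aja_dom s _ σ hσ a).2 trivial
      cases h : σ a with
      | none => rw [h] at this; simp at this
      | some x => exact (hsub a x h).symm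
    rwa [this]
  · rw [M.out_glue s A hA σ hσ]
    exact ⟨σ', hσ', hsub, ht⟩

lemma out_full (M : CGM Agt AP) (s : M.St) (A : Set Agt)
    (σ : Agt → Option M.Act) (hσ : σ ∈ M.aja s A) (t : M.St) (ht : t ∈ M.out s σ) :
    ∃ σ' ∈ M.aja s Set.univ, subJA σ σ' ∧ t ∈ M.out s σ' := by
  by_cases hA : A = Set.univ
  · subst hA; exact ⟨σ, hσ, fun a x h => h, ht⟩
  · rw [M.out_glue s A hA σ hσ] at ht; exact ht

lemma out_nonempty (M : CGM Agt AP) (s : M.St) (A : Set Agt)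
    (σ : Agt → Option M.Act) (hσ : σ ∈ M.aja s A) : (M.out s σ).Nonempty := by
  obtain ⟨σ', hσ', hsub⟩ := exists_full_ext M s A σ hσ
  obtain ⟨t, ht⟩ := M.out_univ s σ' hσ'
  exact ⟨t, mem_out_of_sub M s A σ hσ σ' hσ' hsub t (by rw [ht]; rfl)⟩

lemma uplus_mem (M : CGM Agt AP) (s : M.St) (A B : Set Agt)
    (σA σB : Agt → Option M.Act) (hA : σA ∈ M.aja s A) (hB : σB ∈ M.aja s B)
    (hd : A ∩ B = ∅) : uplusJA A B σA σB ∈ M.aja s (A ∪ B) := by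
  classical
  rcases Set.eq_empty_or_nonempty (A ∪ B) with hU | hU
  · have hAe : A = ∅ := Set.subset_eq_empty (Set.subset_union_left.trans hU.subset) rfl
    have : uplusJA A B σA σB = σA := by
      funext a
      have haA : a ∉ A := by rw [hAe]; exact not_false
      have haB : a ∉ B := by
        intro h
        exact absurd (Set.mem_union_right A h) (by rw [hU]; exact not_false)
      simp only [uplusJA, if_neg haA, if_neg haB]
      exact (none_of_not_mem M s A σA hA haA).symm
    rw [this, hU, ← hAe]
    exact hA
  · have hdom : ∀ a : Agt, ((uplusJA A B σA σB) a).isSome ↔ a ∈ A ∪ B := by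
      intro a
      by_cases h1 : a ∈ A
      · simpa [uplusJA, h1] using (M.aja_dom s A σA hA a).2 h1
      · by_cases h2 : a ∈ B
        · simp only [uplusJA, if_neg h1, if_pos h2]
          simpa [h1, h2] using (M.aja_dom s B σB hB a).2 h2
        · simp [uplusJA, h1, h2]
    rw [M.aja_glue s (A ∪ B) _ hU hdom]
    intro a ha
    by_cases h1 : a ∈ A
    · have heq : restrictJA (uplusJA A B σA σB) {a} = restrictJA σA {a} := by
        funext b
        simp only [restrictJA, Set.mem_singleton_iff]
        split
        · next hb => subst hb; simp [uplusJA, h1]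
        · rfl
      rw [heq]
      exact (M.aja_glue s A σA ⟨a, h1⟩ (M.aja_dom s A σA hA)).mp hA a h1
    · have h2 : a ∈ B := ha.resolve_left h1
      have heq : restrictJA (uplusJA A B σA σB) {a} = restrictJA σB {a} := by
        funext b
        simp only [restrictJA, Set.mem_singleton_iff]
        split
        · next hb => subst hb; simp [uplusJA, h1, h2]
        · rfl
      rw [heq]
      exact (M.aja_glue s B σB ⟨a, h2⟩ (M.aja_dom s B σB hB)).mp hB a h2

lemma eval_eq_sat (M : CGM Agt AP) (s : M.St) (φ : FormLI Agt AP) :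
    evalLI (fun p => p ∈ M.lab s) (satLI M s) φ ↔ satLI M s φ := by
  induction φ with
  | top => simp [evalLI, satLI]
  | bot => simp [evalLI, satLI]
  | atom p => simp [evalLI, satLI]
  | natom p => simp [evalLI, satLI]
  | and φ ψ ihφ ihψ => simp [evalLI, satLI, ihφ, ihψ]
  | or φ ψ ihφ ihψ => simp [evalLI, satLI, ihφ, ihψ]
  | box A φ _ => simp [evalLI]

end Aux

/-- Soundness of CL_LI: every derivable formula of Φ_CL_LI is valid. -/
theorem soundness_CL_LI
    {Agt AP : Type} [Fintype Agt] [Nonempty Agt] [Countable AP]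
    (φ : FormLI Agt AP) (h : DerLI φ) : validLI φ := by
  induction h with
  | r1 Γ ψ hder hsem IH =>
    intro M s
    have := hsem (fun p => p ∈ M.lab s) (satLI M s)
      (fun φ hφ => (eval_eq_sat M s φ).mpr (IH φ hφ M s))
    exact (eval_eq_sat M s ψ).mp this
  | r2 A φ hφ IH =>
    intro M s σ hσ
    obtain ⟨t, ht⟩ := out_nonempty M s A σ hσ
    exact ⟨t, ht, IH M t⟩
  | r3 A B φ ψ χ hd hder IH =>
    intro M s
    have h := IH M s
    rcases h with h | hχ
    · -- h : satLI M s (box (A ∪ B) (φ ∨ ψ))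
      by_cases hA : satLI M s (FormLI.box A φ)
      · exact Or.inl hA
      · refine Or.inr (Or.inl ?_)
        -- obtain σA witnessing failure of [A]φ
        simp only [satLI, not_forall, not_exists] at hA
        obtain ⟨σA, hσA, hAfail⟩ := hA
        intro σB hσB
        have hτ : uplusJA A B σA σB ∈ M.aja s (A ∪ B) :=
          uplus_mem M s A B σA σB hσA hσB hd
        obtain ⟨t, ht, htsat⟩ := h _ hτ
        obtain ⟨σ', hσ', hsub', ht'⟩ := out_full M s (A ∪ B) _ hτ t ht
        have hsubA : subJA σA (uplusJA A B σA σB) := by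
          intro a x hax
          have ha : a ∈ A := (M.aja_dom s A σA hσA a).1 (by rw [hax]; rfl)
          simp [uplusJA, ha, hax]
        have hsubB : subJA σB (uplusJA A B σA σB) := by
          intro a x hax
          have ha : a ∈ B := (M.aja_dom s B σB hσB a).1 (by rw [hax]; rfl)
          have haA : a ∉ A := fun h' =>
            absurd (Set.mem_inter h' ha) (by rw [hd]; exact not_false)
          simp [uplusJA, haA, ha, hax]
        have htA : t ∈ M.out s σA :=
          mem_out_of_sub M s A σA hσA σ' hσ'
            (fun a x hax => hsub' a x (hsubA a x hax)) t ht'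
        have htB : t ∈ M.out s σB :=
          mem_out_of_sub M s B σB hσB σ' hσ'
            (fun a x hax => hsub' a x (hsubB a x hax)) t ht'
        have hψt : satLI M t ψ := by
          rcases htsat with hφt | hψt
          · exact absurd ⟨htA, hφt⟩ (hAfail t)
          · exact hψt
        exact ⟨t, htB, hψt⟩
    · exact Or.inr (Or.inr hχ)
end

section
/- Completeness of CL_LI: every valid formula of Φ_CL_LI is derivable in the axiomatic system for CL_LI, i.e., for every φ ∈ Φ_CL_LI, if ⊨ φ then ⊢_CL_LI φ. -/
open scoped Classical

section Aux

variable {Agt AP : Type}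

open FormLI

/-- a single-agent joint action -/
noncomputable def unitJA {Act : Type} (a : Agt) (x : Act) : Agt → Option Act :=
  fun b => if b = a then some x else none

lemma subJA_total_eq {Act : Type} {σ σ' : Agt → Option Act}
    (h : subJA σ σ') (ht : ∀ a, (σ a).isSome) : σ' = σ := by
  funext a
  obtain ⟨x, hx⟩ := Option.isSome_iff_exists.mp (ht a)
  rw [hx, h a x hx]

lemma aja_empty (M : CGM Agt AP) (s : M.St) :
    M.aja s ∅ = {fun _ => none} := by
  apply Set.eq_singleton_iff_nonempty_unique_mem.mpr
  constructor
  · exact M.aja_ne s ∅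
  · intro σ hσ
    funext a
    have := M.aja_dom s ∅ σ hσ a
    simp at this
    exact this

lemma restrict_singleton_eq_unit {Act : Type} (σ : Agt → Option Act) (a : Agt) (x : Act)
    (hx : σ a = some x) : restrictJA σ {a} = unitJA a x := by
  funext b
  simp only [restrictJA, unitJA, Set.mem_singleton_iff]
  by_cases hb : b = a
  · subst hb; simp [hx]
  · simp [hb]

/-- data from which a CGM can be built -/
structure PreCGM (Agt AP : Type) where
  St : Type
  Act : Type
  st_ne : Nonempty St
  act_ne : Nonempty Act
  allowed : St → Agt → Set Act
  allowed_ne : ∀ s a, (allowed s a).Nonempty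
  f : St → (Agt → Option Act) → St
  lab : St → Set AP

def PreCGM.aja' (P : PreCGM Agt AP) (s : P.St) (A : Set Agt) :
    Set (Agt → Option P.Act) :=
  {σ | (∀ a, (σ a).isSome ↔ a ∈ A) ∧ ∀ a x, σ a = some x → x ∈ P.allowed s a}

def PreCGM.out' (P : PreCGM Agt AP) (s : P.St) (σ : Agt → Option P.Act) : Set P.St :=
  {t | ∃ σ', σ' ∈ P.aja' s Set.univ ∧ subJA σ σ' ∧ t = P.f s σ'}



lemma PreCGM.mem_aja'_univ_total (P : PreCGM Agt AP) {s : P.St}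
    {σ : Agt → Option P.Act} (h : σ ∈ P.aja' s Set.univ) (a : Agt) : (σ a).isSome :=
  (h.1 a).mpr (Set.mem_univ a)

lemma PreCGM.out_full (P : PreCGM Agt AP) (s : P.St) (σ : Agt → Option P.Act)
    (h : σ ∈ P.aja' s Set.univ) : P.out' s σ = {P.f s σ} := by
  ext t
  simp only [PreCGM.out', Set.mem_setOf_eq, Set.mem_singleton_iff]
  constructor
  · rintro ⟨σ', hσ', hsub, rfl⟩
    rw [subJA_total_eq hsub (P.mem_aja'_univ_total h)]
  · rintro rfl
    exact ⟨σ, h, fun a x hx => hx, rfl⟩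

noncomputable def PreCGM.toCGM (P : PreCGM Agt AP) : CGM Agt AP where
  St := P.St
  Act := P.Act
  st_ne := P.st_ne
  act_ne := P.act_ne
  aja := P.aja'
  out := P.out'
  lab := P.lab
  aja_ne := by
    intro s A
    refine ⟨fun a => if a ∈ A then some (P.allowed_ne s a).choose else none, ?_, ?_⟩
    · intro a; by_cases h : a ∈ A <;> simp [h]
    · intro a x hx
      by_cases h : a ∈ A
      · simp [h] at hx; exact hx ▸ (P.allowed_ne s a).choose_spec
      · simp [h] at hx
  aja_dom := fun s A σ hσ => hσ.1
  aja_glue := by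
    intro s A σ hA hdom
    constructor
    · intro hσ a ha
      constructor
      · intro b
        simp only [restrictJA, Set.mem_singleton_iff]
        by_cases hb : b = a
        · subst hb; simp [ha, (hdom b).mpr ha]
        · simp [hb]
      · intro b x hx
        simp only [restrictJA, Set.mem_singleton_iff] at hx
        by_cases hb : b = a
        · subst hb; simp at hx; exact hσ.2 b x hx
        · simp [hb] at hx
    · intro h
      refine ⟨hdom, ?_⟩
      intro a x hx
      have ha : a ∈ A := (hdom a).mp (by simp [hx])
      have := (h a ha).2 a x
      simp only [restrictJA, Set.mem_singleton_iff, if_pos rfl] at this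
      exact this hx
  out_univ := by
    intro s σ hσ
    exact ⟨P.f s σ, P.out_full s σ hσ⟩
  out_univ_not := by
    intro s σ htot hσ
    ext t
    simp only [PreCGM.out', Set.mem_setOf_eq, Set.mem_empty_iff_false, iff_false]
    rintro ⟨σ', hσ', hsub, rfl⟩
    rw [subJA_total_eq hsub htot] at hσ'
    exact hσ hσ'
  out_glue := by
    intro s A hA σ hσ
    ext t
    simp only [PreCGM.out', Set.mem_setOf_eq]
    constructor
    · rintro ⟨σ', hσ', hsub, rfl⟩
      exact ⟨σ', hσ', hsub, σ', hσ', fun a x hx => hx, rfl⟩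
    · rintro ⟨σ', hσ', hsub, σ'', hσ'', hsub2, rfl⟩
      rw [subJA_total_eq hsub2 (P.mem_aja'_univ_total hσ')]
      exact ⟨σ', hσ', hsub, rfl⟩
  out_not := by
    intro s A σ hdom hA hσ
    ext t
    simp only [PreCGM.out', Set.mem_setOf_eq, Set.mem_empty_iff_false, iff_false]
    rintro ⟨σ', hσ', hsub, rfl⟩
    exact hσ ⟨hdom, fun a x hx => hσ'.2 a x (hsub a x hx)⟩

lemma PreCGM.toCGM_valid_obligations (P : PreCGM Agt AP) : True := trivial

end Aux
section Transfer

variable {Agt AP : Type}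

/-- mapping a joint action along an action relabeling -/
def mapJA {Act Act' : Type} (k : Act → Act') (σ : Agt → Option Act) :
    Agt → Option Act' := fun a => (σ a).map k

lemma mapJA_isSome {Act Act' : Type} (k : Act → Act') (σ : Agt → Option Act) (a : Agt) :
    ((mapJA k σ) a).isSome = (σ a).isSome := by
  simp [mapJA]

lemma subJA_mapJA {Act Act' : Type} (k : Act → Act') {σ σ' : Agt → Option Act}
    (h : subJA σ σ') : subJA (mapJA k σ) (mapJA k σ') := by
  intro a y hy
  simp only [mapJA, Option.map_eq_some_iff] at hy ⊢
  obtain ⟨x, hx, rfl⟩ := hy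
  exact ⟨x, h a x hx, rfl⟩

lemma subJA_of_mapJA {Act Act' : Type} {k : Act → Act'} (hk : Function.Injective k)
    {σ σ'' : Agt → Option Act} (h : subJA (mapJA k σ) (mapJA k σ'')) : subJA σ σ'' := by
  intro a x hx
  have : (mapJA k σ) a = some (k x) := by simp [mapJA, hx]
  have h2 := h a (k x) this
  simp only [mapJA, Option.map_eq_some_iff] at h2
  obtain ⟨x', hx', hkx⟩ := h2
  rw [← hk hkx]; exact hx'

lemma mapJA_injective {Act Act' : Type} {k : Act → Act'} (hk : Function.Injective k) :
    Function.Injective (mapJA (Agt := Agt) k) := by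
  intro σ σ' h
  funext a
  have := congrFun h a
  simp only [mapJA] at this
  cases hσ : σ a with
  | none => cases hσ' : σ' a with
    | none => rfl
    | some y => rw [hσ, hσ'] at this; simp at this
  | some x => cases hσ' : σ' a with
    | none => rw [hσ, hσ'] at this; simp at this
    | some y => rw [hσ, hσ'] at this; simp at this; rw [hk this]

theorem sat_transfer (M : CGM Agt AP) (P : PreCGM Agt AP)
    (h : M.St → P.St) (k : M.Act → P.Act) (hk : Function.Injective k)
    (hpush : ∀ s A σ, σ ∈ M.aja s A → mapJA k σ ∈ P.aja' (h s) A)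
    (hpull : ∀ s A τ, τ ∈ P.aja' (h s) A → ∃ σ ∈ M.aja s A, mapJA k σ = τ)
    (hout : ∀ s σ, σ ∈ M.aja s Set.univ →
      P.out' (h s) (mapJA k σ) = h '' (M.out s σ))
    (hlab : ∀ s, P.lab (h s) = M.lab s) :
    ∀ (φ : FormLI Agt AP) (s : M.St), satLI P.toCGM (h s) φ ↔ satLI M s φ := by
  intro φ
  induction φ with
  | top => intro s; simp [satLI]
  | bot => intro s; simp [satLI]
  | atom p => intro s; simp [satLI, PreCGM.toCGM, hlab s]
  | natom p => intro s; simp [satLI, PreCGM.toCGM, hlab s]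
  | and φ ψ ihφ ihψ => intro s; simp [satLI, ihφ s, ihψ s]
  | or φ ψ ihφ ihψ => intro s; simp [satLI, ihφ s, ihψ s]
  | box A φ ih =>
    intro s
    show (∀ τ ∈ P.aja' (h s) A, ∃ t' ∈ P.out' (h s) τ, satLI P.toCGM t' φ) ↔ _
    constructor
    · -- from the big model to M
      intro H σ hσ
      obtain ⟨t', ht', hsat⟩ := H (mapJA k σ) (hpush s A σ hσ)
      by_cases hA : A = Set.univ
      · subst hA
        rw [hout s σ hσ] at ht'
        obtain ⟨t, ht, rfl⟩ := ht'
        exact ⟨t, ht, (ih t).mp hsat⟩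
      · obtain ⟨τ'', hτ'', hsub2, ht'2⟩ := ht'
        obtain ⟨σ'', hσ'', rfl⟩ := hpull s Set.univ τ'' hτ''
        have hsubσ : subJA σ σ'' := subJA_of_mapJA hk hsub2
        have : t' ∈ P.out' (h s) (mapJA k σ'') := by
          rw [P.out_full (h s) (mapJA k σ'') hτ'']
          exact ht'2
        rw [hout s σ'' hσ''] at this
        obtain ⟨t, ht, rfl⟩ := this
        refine ⟨t, ?_, (ih t).mp hsat⟩
        rw [M.out_glue s A hA σ hσ]
        exact ⟨σ'', hσ'', hsubσ, ht⟩
    · -- from M to the big model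
      intro H τ hτ
      obtain ⟨σ, hσ, rfl⟩ := hpull s A τ hτ
      obtain ⟨t, ht, hsat⟩ := H σ hσ
      by_cases hA : A = Set.univ
      · subst hA
        refine ⟨h t, ?_, (ih t).mpr hsat⟩
        rw [hout s σ hσ]
        exact ⟨t, ht, rfl⟩
      · rw [M.out_glue s A hA σ hσ] at ht
        obtain ⟨σ'', hσ'', hsub, ht⟩ := ht
        refine ⟨h t, ?_, (ih t).mpr hsat⟩
        refine ⟨mapJA k σ'', hpush s Set.univ σ'' hσ'', subJA_mapJA k hsub, ?_⟩
        have hmem : h t ∈ P.out' (h s) (mapJA k σ'') := by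
          rw [hout s σ'' hσ'']; exact ⟨t, ht, rfl⟩
        rw [P.out_full (h s) (mapJA k σ'') (hpush s Set.univ σ'' hσ'')] at hmem
        exact hmem

end Transfer
section BigModel

variable {Agt AP : Type}

lemma unit_mem_aja_of_mem (M : CGM Agt AP) {s : M.St} {A : Set Agt}
    {σ : Agt → Option M.Act} (hσ : σ ∈ M.aja s A) {a : Agt} {y : M.Act}
    (hy : σ a = some y) : unitJA a y ∈ M.aja s {a} := by
  have ha : a ∈ A := (M.aja_dom s A σ hσ a).mp (by simp [hy])
  have hA : A.Nonempty := ⟨a, ha⟩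
  have := ((M.aja_glue s A σ hA (M.aja_dom s A σ hσ)).mp hσ) a ha
  rwa [restrict_singleton_eq_unit σ a y hy] at this

lemma exists_unit_mem (M : CGM Agt AP) (s : M.St) (a : Agt) :
    ∃ y : M.Act, unitJA a y ∈ M.aja s {a} := by
  obtain ⟨σ, hσ⟩ := M.aja_ne s {a}
  have ha : (σ a).isSome := (M.aja_dom s {a} σ hσ a).mpr rfl
  obtain ⟨y, hy⟩ := Option.isSome_iff_exists.mp ha
  exact ⟨y, unit_mem_aja_of_mem M hσ hy⟩

variable (lits : Set AP) (n : ℕ)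
variable (Mdl : (Agt → Fin (n + 1)) → CGM Agt AP) (tV : ∀ V, (Mdl V).St)

def BigSt : Type := Option (Σ V : Agt → Fin (n + 1), (Mdl V).St)

def BigAct : Type := Sum (Fin (n + 1)) (Σ V : Agt → Fin (n + 1), (Mdl V).Act)

def kV (V : Agt → Fin (n + 1)) : (Mdl V).Act → BigAct n Mdl :=
  fun y => Sum.inr ⟨V, y⟩

lemma kV_injective (V : Agt → Fin (n + 1)) : Function.Injective (kV n Mdl V) := by
  intro x y h
  simp only [kV] at h
  have h2 : (⟨V, x⟩ : Σ W : Agt → Fin (n+1), (Mdl W).Act) = ⟨V, y⟩ := by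
    injection h
  have := heq_of_eq h2
  simp at h2
  exact h2

noncomputable def getV (τ : Agt → Option (BigAct n Mdl)) (a : Agt) : Fin (n + 1) :=
  match τ a with
  | some (Sum.inl v) => v
  | _ => 0

/-- successor state inside a copy -/
noncomputable def nextSt (V : Agt → Fin (n + 1)) (s : (Mdl V).St)
    (τ : Agt → Option (BigAct n Mdl)) : (Mdl V).St :=
  if h : ∃ t, ∃ σM ∈ (Mdl V).aja s Set.univ,
      mapJA (kV n Mdl V) σM = τ ∧ t ∈ (Mdl V).out s σM then h.choose else s

noncomputable def bigPre : PreCGM Agt AP where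
  St := BigSt n Mdl
  Act := BigAct n Mdl
  st_ne := ⟨none⟩
  act_ne := ⟨Sum.inl 0⟩
  allowed := fun s a =>
    match s with
    | none => {x | ∃ v : Fin (n + 1), x = Sum.inl v}
    | some ⟨V, s⟩ =>
        {x | ∃ y : (Mdl V).Act, x = Sum.inr ⟨V, y⟩ ∧ unitJA a y ∈ (Mdl V).aja s {a}}
  allowed_ne := by
    intro s a
    match s with
    | none => exact ⟨Sum.inl 0, 0, rfl⟩
    | some ⟨V, s⟩ =>
        obtain ⟨y, hy⟩ := exists_unit_mem (Mdl V) s a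
        exact ⟨Sum.inr ⟨V, y⟩, y, rfl, hy⟩
  f := fun s τ =>
    match s with
    | none => some ⟨getV n Mdl τ, tV (getV n Mdl τ)⟩
    | some ⟨V, s⟩ => some ⟨V, nextSt n Mdl V s τ⟩
  lab := fun s =>
    match s with
    | none => lits
    | some ⟨V, s⟩ => (Mdl V).lab s

lemma big_push (V : Agt → Fin (n + 1)) (s : (Mdl V).St) (A : Set Agt)
    (σ : Agt → Option (Mdl V).Act) (hσ : σ ∈ (Mdl V).aja s A) :
    mapJA (kV n Mdl V) σ ∈ (bigPre lits n Mdl tV).aja' (some ⟨V, s⟩) A := by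
  constructor
  · intro a
    show ((mapJA (kV n Mdl V) σ) a).isSome ↔ a ∈ A
    rw [mapJA_isSome]
    exact (Mdl V).aja_dom s A σ hσ a
  · intro a x hx
    replace hx := Option.map_eq_some_iff.mp
      (show Option.map (kV n Mdl V) (σ a) = some (x : BigAct n Mdl) from hx)
    obtain ⟨y, hy, rfl⟩ := hx
    exact ⟨y, rfl, unit_mem_aja_of_mem (Mdl V) hσ hy⟩

lemma big_pull (V : Agt → Fin (n + 1)) (s : (Mdl V).St) (A : Set Agt)
    (τ : Agt → Option (BigAct n Mdl))
    (hτ : τ ∈ (bigPre lits n Mdl tV).aja' (some ⟨V, s⟩) A) :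
    ∃ σ ∈ (Mdl V).aja s A, mapJA (kV n Mdl V) σ = τ := by
  classical
  have key : ∀ a ∈ A, ∃ y : (Mdl V).Act,
      τ a = some (Sum.inr ⟨V, y⟩) ∧ unitJA a y ∈ (Mdl V).aja s {a} := by
    intro a ha
    have hs : (τ a).isSome := (hτ.1 a).mpr ha
    obtain ⟨x, hx⟩ := Option.isSome_iff_exists.mp hs
    obtain ⟨y, rfl, hy⟩ := hτ.2 a x hx
    exact ⟨y, hx, hy⟩
  set σ : Agt → Option (Mdl V).Act := fun a =>
    if h : ∃ y : (Mdl V).Act,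
        τ a = some (Sum.inr ⟨V, y⟩) ∧ unitJA a y ∈ (Mdl V).aja s {a}
    then some h.choose else none with hσdef
  have hdom : ∀ a, (σ a).isSome ↔ a ∈ A := by
    intro a
    constructor
    · intro h
      by_contra ha
      have hn : τ a = none := by
        have := (hτ.1 a); simp [ha] at this; revert this; cases τ a with | none => intro _; rfl | some z => intro h'; cases h'
      simp only [hσdef] at h
      rw [dif_neg] at h
      · simp at h
      · rintro ⟨y, hy, -⟩; rw [hn] at hy; cases hy
    · intro ha
      simp only [hσdef]
      rw [dif_pos (key a ha)]
      simp
  have hmap : mapJA (kV n Mdl V) σ = τ := by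
    funext a
    by_cases ha : a ∈ A
    · have h := key a ha
      simp only [mapJA, hσdef, dif_pos h]
      rw [Option.map_some]
      exact h.choose_spec.1.symm
    · have hn : τ a = none := by
        have := (hτ.1 a); simp [ha] at this; revert this; cases τ a with | none => intro _; rfl | some z => intro h'; cases h'
      have : σ a = none := Option.not_isSome_iff_eq_none.mp (fun h => ha ((hdom a).mp h))
      simp [mapJA, this, hn]
  refine ⟨σ, ?_, hmap⟩
  rcases Set.eq_empty_or_nonempty A with hA | hA
  · subst hA
    rw [aja_empty]
    have : σ = fun _ => none := by
      funext a
      exact Option.not_isSome_iff_eq_none.mp (fun h => absurd ((hdom a).mp h) (by simp))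
    simp [this]
  · rw [(Mdl V).aja_glue s A σ hA hdom]
    intro a ha
    have h := key a ha
    have hσa : σ a = some h.choose := by simp only [hσdef]; rw [dif_pos h]
    rw [restrict_singleton_eq_unit σ a h.choose hσa]
    exact h.choose_spec.2

lemma big_out (V : Agt → Fin (n + 1)) (s : (Mdl V).St)
    (σ : Agt → Option (Mdl V).Act) (hσ : σ ∈ (Mdl V).aja s Set.univ) :
    (bigPre lits n Mdl tV).out' (some ⟨V, s⟩) (mapJA (kV n Mdl V) σ)
      = (fun t => (some ⟨V, t⟩ : BigSt n Mdl)) '' ((Mdl V).out s σ) := by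
  have hτ := big_push lits n Mdl tV V s Set.univ σ hσ
  refine (PreCGM.out_full _ _ _ hτ).trans ?_
  obtain ⟨t0, ht0⟩ := (Mdl V).out_univ s σ hσ
  rw [ht0]
  have hex : ∃ t, ∃ σM ∈ (Mdl V).aja s Set.univ,
      mapJA (kV n Mdl V) σM = mapJA (kV n Mdl V) σ ∧ t ∈ (Mdl V).out s σM :=
    ⟨t0, σ, hσ, rfl, by rw [ht0]; rfl⟩
  have hnext : nextSt n Mdl V s (mapJA (kV n Mdl V) σ) = t0 := by
    rw [nextSt, dif_pos hex]
    obtain ⟨σM, hσM, heq, ht⟩ := hex.choose_spec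
    have : σM = σ := mapJA_injective (kV_injective n Mdl V) heq
    rw [this, ht0] at ht
    exact ht
  show ({(bigPre lits n Mdl tV).f (some ⟨V, s⟩) (mapJA (kV n Mdl V) σ)} : Set _) = _
  simp only [bigPre, hnext, Set.image_singleton]; rfl

lemma big_sat (V : Agt → Fin (n + 1)) (φ : FormLI Agt AP) (s : (Mdl V).St) :
    satLI (bigPre lits n Mdl tV).toCGM (some ⟨V, s⟩) φ ↔ satLI (Mdl V) s φ :=
  sat_transfer (Mdl V) (bigPre lits n Mdl tV)
    (fun t => some ⟨V, t⟩) (kV n Mdl V) (kV_injective n Mdl V)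
    (big_push lits n Mdl tV V) (big_pull lits n Mdl tV V) (big_out lits n Mdl tV V)
    (fun _ => rfl) φ s

end BigModel
section Refute

variable {Agt AP : Type}
variable (lits : Set AP) (n : ℕ)
variable (Mdl : (Agt → Fin (n + 1)) → CGM Agt AP) (tV : ∀ V, (Mdl V).St)

lemma big_refute_root (A : Fin n → Set Agt) (φi : Fin n → FormLI Agt AP)
    (hrefute : ∀ (V : Agt → Fin (n + 1)) (i : Fin n),
      (∀ a ∈ A i, V a = i.succ) → ¬ satLI (Mdl V) (tV V) (φi i))
    (i : Fin n) :
    ¬ satLI (bigPre lits n Mdl tV).toCGM none (FormLI.box (A i) (φi i)) := by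
  intro H
  set σi : Agt → Option (BigAct n Mdl) :=
    fun a => if a ∈ A i then some (Sum.inl i.succ) else none with hσidef
  have hσi : σi ∈ (bigPre lits n Mdl tV).aja' none (A i) := by
    constructor
    · intro a; by_cases h : a ∈ A i <;> simp [hσidef, h] <;> rfl
    · intro a x hx
      by_cases h : a ∈ A i
      · simp [hσidef, h] at hx
        exact ⟨i.succ, (Option.some.inj hx).symm⟩
      · simp [hσidef, h] at hx
  obtain ⟨t', ht', hsat⟩ := H σi hσi
  obtain ⟨τ, hτ, hsub, rfl⟩ := ht'
  set V := getV n Mdl τ with hVdef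
  have hvotes : ∀ a ∈ A i, V a = i.succ := by
    intro a ha
    have hτa : τ a = some (Sum.inl i.succ) := by
      apply hsub
      simp [hσidef, ha]; rfl
    simp only [hVdef]
    unfold getV
    rw [hτa]
  have hf : (bigPre lits n Mdl tV).f none τ = some ⟨V, tV V⟩ := rfl
  rw [hf] at hsat
  rw [big_sat lits n Mdl tV V (φi i) (tV V)] at hsat
  exact hrefute V i hvotes hsat

end Refute
section Formulas

variable {Agt AP : Type}

open FormLI

/-- modal depth -/
def mdepth : FormLI Agt AP → ℕ
  | FormLI.and φ ψ => max (mdepth φ) (mdepth ψ)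
  | FormLI.or φ ψ => max (mdepth φ) (mdepth ψ)
  | FormLI.box _ φ => mdepth φ + 1
  | _ => 0

def toBox : FormLI Agt AP → Option (Set Agt × FormLI Agt AP)
  | FormLI.box A φ => some (A, φ)
  | _ => none

lemma toBox_eq_some {ρ : FormLI Agt AP} {p : Set Agt × FormLI Agt AP}
    (h : toBox ρ = some p) : ρ = FormLI.box p.1 p.2 := by
  cases ρ <;> try (simp [toBox] at h; done)
  injection h with h2
  subst h2
  rfl

/-- conjunctive normal form, treating boxes as atoms -/
def cnf : FormLI Agt AP → List (List (FormLI Agt AP))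
  | FormLI.top => []
  | FormLI.bot => [[]]
  | FormLI.atom p => [[FormLI.atom p]]
  | FormLI.natom p => [[FormLI.natom p]]
  | FormLI.and φ ψ => cnf φ ++ cnf ψ
  | FormLI.or φ ψ => (cnf φ).flatMap fun cl => (cnf ψ).map fun dl => cl ++ dl
  | FormLI.box A φ => [[FormLI.box A φ]]

lemma eval_bigOr {v : AP → Prop} {w : FormLI Agt AP → Prop} (l : List (FormLI Agt AP)) :
    evalLI v w (bigOrLI l) ↔ ∃ ρ ∈ l, evalLI v w ρ := by
  induction l with
  | nil => simp [bigOrLI, evalLI]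
  | cons ρ l ih => simp [bigOrLI, evalLI, ih]

lemma sat_bigOr {M : CGM Agt AP} {s : M.St} (l : List (FormLI Agt AP)) :
    satLI M s (bigOrLI l) ↔ ∃ ρ ∈ l, satLI M s ρ := by
  induction l with
  | nil => simp [bigOrLI, satLI]
  | cons ρ l ih => simp [bigOrLI, satLI, ih]

lemma sat_eval {M : CGM Agt AP} {s : M.St} (φ : FormLI Agt AP) :
    satLI M s φ ↔ evalLI (· ∈ M.lab s) (satLI M s) φ := by
  induction φ with
  | top => simp [satLI, evalLI]
  | bot => simp [satLI, evalLI]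
  | atom p => simp [satLI, evalLI]
  | natom p => simp [satLI, evalLI]
  | and φ ψ ihφ ihψ => simp [satLI, evalLI, ihφ, ihψ]
  | or φ ψ ihφ ihψ => simp [satLI, evalLI, ihφ, ihψ]
  | box A φ ih => simp [evalLI]

lemma cnf_eval {v : AP → Prop} {w : FormLI Agt AP → Prop} (φ : FormLI Agt AP) :
    evalLI v w φ ↔ ∀ cl ∈ cnf φ, ∃ ρ ∈ cl, evalLI v w ρ := by
  induction φ with
  | top => simp [cnf, evalLI]
  | bot => simp [cnf, evalLI]
  | atom p => simp [cnf, evalLI]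
  | natom p => simp [cnf, evalLI]
  | box A φ ih => simp [cnf, evalLI]
  | and φ ψ ihφ ihψ =>
      simp only [cnf, evalLI, List.mem_append, ihφ, ihψ]
      constructor
      · rintro ⟨h1, h2⟩ cl (h | h)
        · exact h1 cl h
        · exact h2 cl h
      · intro h
        exact ⟨fun cl hcl => h cl (Or.inl hcl), fun cl hcl => h cl (Or.inr hcl)⟩
  | or φ ψ ihφ ihψ =>
      simp only [cnf, evalLI, List.mem_flatMap, List.mem_map]
      constructor
      · rintro (h | h) cl ⟨c1, hc1, c2, hc2, rfl⟩
        · obtain ⟨ρ, hρ, hev⟩ := ihφ.mp h c1 hc1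
          exact ⟨ρ, by simp [hρ], hev⟩
        · obtain ⟨ρ, hρ, hev⟩ := ihψ.mp h c2 hc2
          exact ⟨ρ, by simp [hρ], hev⟩
      · intro h
        by_cases hφ : evalLI v w φ
        · exact Or.inl hφ
        · right
          rw [ihψ]
          intro c2 hc2
          obtain ⟨c1, hc1, hfail⟩ : ∃ c1 ∈ cnf φ, ∀ ρ ∈ c1, ¬ evalLI v w ρ := by
            by_contra hc
            push_neg at hc
            exact hφ (ihφ.mpr fun cl hcl => hc cl hcl)
          obtain ⟨ρ, hρ, hev⟩ := h (c1 ++ c2) ⟨c1, hc1, c2, hc2, rfl⟩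
          rcases List.mem_append.mp hρ with h1 | h2
          · exact absurd hev (hfail ρ h1)
          · exact ⟨ρ, h2, hev⟩

lemma cnf_shape (φ : FormLI Agt AP) :
    ∀ cl ∈ cnf φ, ∀ ρ ∈ cl,
      ((∃ p, ρ = FormLI.atom p) ∨ (∃ p, ρ = FormLI.natom p) ∨
        (∃ A ψ, ρ = FormLI.box A ψ)) ∧ mdepth ρ ≤ mdepth φ := by
  induction φ with
  | top => simp [cnf]
  | bot => simp [cnf]
  | atom p => simp [cnf]
  | natom p => simp [cnf]
  | box A φ => simp [cnf]
  | and φ ψ ihφ ihψ =>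
      intro cl hcl ρ hρ
      rcases List.mem_append.mp hcl with h | h
      · obtain ⟨hs, hd⟩ := ihφ cl h ρ hρ
        exact ⟨hs, le_trans hd (by simp [mdepth])⟩
      · obtain ⟨hs, hd⟩ := ihψ cl h ρ hρ
        exact ⟨hs, le_trans hd (by simp [mdepth])⟩
  | or φ ψ ihφ ihψ =>
      intro cl hcl ρ hρ
      simp only [cnf, List.mem_flatMap, List.mem_map] at hcl
      obtain ⟨c1, hc1, c2, hc2, rfl⟩ := hcl
      rcases List.mem_append.mp hρ with h | h
      · obtain ⟨hs, hd⟩ := ihφ c1 hc1 ρ h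
        exact ⟨hs, le_trans hd (by simp [mdepth])⟩
      · obtain ⟨hs, hd⟩ := ihψ c2 hc2 ρ h
        exact ⟨hs, le_trans hd (by simp [mdepth])⟩

/-- derived rule: propositional consequence of one derivable formula -/
lemma derOf {α β : FormLI Agt AP} (h : DerLI α)
    (himp : ∀ (v : AP → Prop) (w : FormLI Agt AP → Prop), evalLI v w α → evalLI v w β) :
    DerLI β :=
  DerLI.r1 [α] β (by simpa using h) (fun v w hΓ => himp v w (hΓ α (by simp)))

/-- nonempty big disjunction -/
def bigOr1 : FormLI Agt AP → List (FormLI Agt AP) → FormLI Agt AP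
  | φ, [] => φ
  | φ, ψ :: l => FormLI.or φ (bigOr1 ψ l)

lemma sat_bigOr1 {M : CGM Agt AP} {s : M.St} (φ : FormLI Agt AP)
    (l : List (FormLI Agt AP)) :
    satLI M s (bigOr1 φ l) ↔ ∃ ρ ∈ φ :: l, satLI M s ρ := by
  induction l generalizing φ with
  | nil => simp [bigOr1]
  | cons ψ l ih => simp [bigOr1, satLI, ih]; try tauto

lemma mdepth_bigOr1 {d : ℕ} (φ : FormLI Agt AP) (l : List (FormLI Agt AP))
    (h : ∀ ρ ∈ φ :: l, mdepth ρ ≤ d) : mdepth (bigOr1 φ l) ≤ d := by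
  induction l generalizing φ with
  | nil => exact h φ (by simp)
  | cons ψ l ih =>
      simp only [bigOr1, mdepth, max_le_iff]
      exact ⟨h φ (by simp), ih ψ fun ρ hρ => h ρ (List.mem_cons_of_mem φ hρ)⟩

def unionList : List (Set Agt × FormLI Agt AP) → Set Agt :=
  List.foldr (fun p U => p.1 ∪ U) ∅

lemma inter_unionList_empty {A : Set Agt} {l : List (Set Agt × FormLI Agt AP)}
    (h : ∀ q ∈ l, A ∩ q.1 = ∅) : A ∩ unionList l = ∅ := by
  induction l with
  | nil => simp [unionList]
  | cons q l ih =>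
      show A ∩ (q.1 ∪ unionList l) = ∅
      rw [Set.inter_union_distrib_left, h q (by simp), ih fun r hr => h r (by simp [hr])]
      simp

end Formulas
section Chain

variable {Agt AP : Type}

noncomputable def trivPre : PreCGM Agt AP where
  St := PUnit
  Act := PUnit
  st_ne := ⟨⟨⟩⟩
  act_ne := ⟨⟨⟩⟩
  allowed := fun _ _ => Set.univ
  allowed_ne := fun _ _ => ⟨⟨⟩, trivial⟩
  f := fun _ _ => ⟨⟩
  lab := fun _ => ∅

lemma eval_foldrBox {v : AP → Prop} {w : FormLI Agt AP → Prop}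
    (χ : FormLI Agt AP) (l : List (Set Agt × FormLI Agt AP)) :
    evalLI v w (List.foldr (fun q acc => FormLI.or (FormLI.box q.1 q.2) acc) χ l) ↔
      (∃ q ∈ l, w (FormLI.box q.1 q.2)) ∨ evalLI v w χ := by
  induction l with
  | nil => simp
  | cons q l ih =>
      show evalLI v w (FormLI.or _ _) ↔ _
      simp only [evalLI, ih, List.mem_cons]
      constructor
      · rintro (hw | ⟨⟨q', hq', hwq⟩ | hχ⟩)
        · exact Or.inl ⟨q, Or.inl rfl, hw⟩
        · exact Or.inl ⟨q', Or.inr hq', hwq⟩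
        · exact Or.inr hχ
      · rintro (⟨q', (rfl | hq'), hwq⟩ | hχ)
        · exact Or.inl hwq
        · exact Or.inr (Or.inl ⟨q', hq', hwq⟩)
        · exact Or.inr (Or.inr hχ)

lemma chain_derive :
    ∀ (l : List (Set Agt × FormLI Agt AP)) (p : Set Agt × FormLI Agt AP)
      (χ : FormLI Agt AP),
      (p :: l).Pairwise (fun x y => x.1 ∩ y.1 = ∅) →
      DerLI (FormLI.or (FormLI.box (p.1 ∪ unionList l)
        (bigOr1 p.2 (l.map Prod.snd))) χ) →
      DerLI (List.foldr (fun q acc => FormLI.or (FormLI.box q.1 q.2) acc) χ (p :: l)) := by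
  intro l
  induction l with
  | nil =>
      intro p χ _ hprem
      rw [show p.1 ∪ unionList ([] : List (Set Agt × FormLI Agt AP)) = p.1 by
        simp [unionList]] at hprem
      exact hprem
  | cons q l ih =>
      intro p χ hpw hprem
      obtain ⟨hp, hpwtail⟩ := List.pairwise_cons.mp hpw
      have hdisj : p.1 ∩ (q.1 ∪ unionList l) = ∅ := by
        rw [Set.inter_union_distrib_left, hp q (by simp),
          inter_unionList_empty (fun r hr => hp r (by simp [hr]))]
        simp
      have step := DerLI.r3 p.1 (q.1 ∪ unionList l) p.2
        (bigOr1 q.2 (l.map Prod.snd)) χ hdisj hprem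
      have reord : DerLI (FormLI.or (FormLI.box (q.1 ∪ unionList l)
          (bigOr1 q.2 (l.map Prod.snd))) (FormLI.or (FormLI.box p.1 p.2) χ)) := by
        apply derOf step
        intro v w hev
        simp only [evalLI] at hev ⊢
        tauto
      have := ih q (FormLI.or (FormLI.box p.1 p.2) χ) hpwtail reord
      apply derOf this
      intro v w hev
      rw [eval_foldrBox] at hev
      replace hev : (∃ q' ∈ q :: l, w (FormLI.box q'.1 q'.2)) ∨
          (w (FormLI.box p.1 p.2) ∨ evalLI v w χ) := hev
      have hgoal : w (FormLI.box p.1 p.2) ∨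
          ((∃ q' ∈ q :: l, w (FormLI.box q'.1 q'.2)) ∨ evalLI v w χ) := by
        rcases hev with h1 | (h2 | h3)
        · exact Or.inr (Or.inl h1)
        · exact Or.inl h2
        · exact Or.inr (Or.inr h3)
      show w (FormLI.box p.1 p.2) ∨ evalLI v w
        (List.foldr (fun q acc => FormLI.or (FormLI.box q.1 q.2) acc) χ (q :: l))
      rw [eval_foldrBox]
      exact hgoal

end Chain
section ClauseCM

variable {Agt AP : Type}

theorem clause_countermodel (c : List (FormLI Agt AP))
    (hnt : ¬ ∃ p, FormLI.atom p ∈ c ∧ FormLI.natom p ∈ c)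
    (hshape : ∀ ρ ∈ c, (∃ p, ρ = FormLI.atom p) ∨ (∃ p, ρ = FormLI.natom p) ∨
        ∃ A ψ, ρ = FormLI.box A ψ)
    (hmaster : ∀ sub : List (Set Agt × FormLI Agt AP),
      sub.Pairwise (fun x y => x.1 ∩ y.1 = ∅) →
      (∀ q ∈ sub, FormLI.box q.1 q.2 ∈ c) →
      ∃ (M : CGM Agt AP) (t : M.St), ∀ q ∈ sub, ¬ satLI M t q.2) :
    ¬ validLI (bigOrLI c) := by
  classical
  set bs := c.filterMap toBox with hbs
  set n := bs.length with hn
  have hboxmem : ∀ i : Fin n, FormLI.box (bs.get i).1 (bs.get i).2 ∈ c := by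
    intro i
    have hmem : bs.get i ∈ bs := by
      have h2 := List.get_mem bs i
      simpa using h2
    obtain ⟨ρ, hρ, hto⟩ := List.mem_filterMap.mp hmem
    rw [← toBox_eq_some hto]
    exact hρ
  have hex : ∀ V : Agt → Fin (n + 1), ∃ (M : CGM Agt AP) (t : M.St),
      ∀ i : Fin n, (∀ a ∈ (bs.get i).1, V a = i.succ) → ¬ satLI M t (bs.get i).2 := by
    intro V
    set idx := (List.finRange n).filter
      (fun i => decide (∀ a ∈ (bs.get i).1, V a = i.succ)) with hidx
    set sub := idx.map bs.get with hsubdef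
    have hpw : sub.Pairwise (fun x y => x.1 ∩ y.1 = ∅) := by
      rw [hsubdef, List.pairwise_map]
      have hne : idx.Pairwise (· ≠ ·) := (List.nodup_finRange n).filter _
      refine hne.imp_of_mem ?_
      intro i j hi hj hij
      have hpi : ∀ a ∈ (bs.get i).1, V a = i.succ :=
        of_decide_eq_true (List.mem_filter.mp hi).2
      have hpj : ∀ a ∈ (bs.get j).1, V a = j.succ :=
        of_decide_eq_true (List.mem_filter.mp hj).2
      ext a
      simp only [Set.mem_inter_iff, Set.mem_empty_iff_false, iff_false, not_and]
      intro hai haj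
      exact absurd (Fin.succ_injective n ((hpi a hai).symm.trans (hpj a haj))) hij
    have hsubc : ∀ q ∈ sub, FormLI.box q.1 q.2 ∈ c := by
      intro q hq
      rw [hsubdef, List.mem_map] at hq
      obtain ⟨i, _, rfl⟩ := hq
      exact hboxmem i
    obtain ⟨M, t, hMt⟩ := hmaster sub hpw hsubc
    refine ⟨M, t, fun i hvotes => ?_⟩
    apply hMt (bs.get i)
    rw [hsubdef, List.mem_map]
    exact ⟨i, List.mem_filter.mpr ⟨List.mem_finRange i, decide_eq_true hvotes⟩, rfl⟩
  set Mdl : (Agt → Fin (n + 1)) → CGM Agt AP := fun V => (hex V).choose with hMdl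
  set tV : ∀ V, (Mdl V).St := fun V => (hex V).choose_spec.choose with htV
  have hrefute : ∀ (V : Agt → Fin (n + 1)) (i : Fin n),
      (∀ a ∈ (bs.get i).1, V a = i.succ) → ¬ satLI (Mdl V) (tV V) (bs.get i).2 :=
    fun V => (hex V).choose_spec.choose_spec
  set lits : Set AP := {p | FormLI.natom p ∈ c} with hlits
  intro hval
  have hs := hval (bigPre lits n Mdl tV).toCGM none
  replace hs := (sat_bigOr c).mp hs
  obtain ⟨ρ, hρ, hsρ⟩ := hs
  rcases hshape ρ hρ with ⟨p, rfl⟩ | ⟨p, rfl⟩ | ⟨A, ψ, rfl⟩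
  · have hp : p ∈ lits := hsρ
    exact hnt ⟨p, hρ, hp⟩
  · exact hsρ hρ
  · have hmem : (A, ψ) ∈ bs := by
      exact List.mem_filterMap.mpr ⟨FormLI.box A ψ, hρ, rfl⟩
    obtain ⟨i, hi⟩ := List.mem_iff_get.mp hmem
    apply big_refute_root lits n Mdl tV (fun j => (bs.get j).1) (fun j => (bs.get j).2)
      hrefute i
    rw [hi]
    exact hsρ

end ClauseCM
section Main

variable {Agt AP : Type}

theorem clause_case (d : ℕ)
    (IH : ∀ ψ : FormLI Agt AP, mdepth ψ < d → validLI ψ → DerLI ψ)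
    (c : List (FormLI Agt AP))
    (hshape : ∀ ρ ∈ c,
      ((∃ p, ρ = FormLI.atom p) ∨ (∃ p, ρ = FormLI.natom p) ∨
        ∃ A ψ, ρ = FormLI.box A ψ) ∧ mdepth ρ ≤ d)
    (hval : validLI (bigOrLI c)) : DerLI (bigOrLI c) := by
  classical
  by_cases htaut : ∃ p, FormLI.atom p ∈ c ∧ FormLI.natom p ∈ c
  · obtain ⟨p, h1, h2⟩ := htaut
    apply DerLI.r1 [] _ (by simp)
    intro v w _
    rw [eval_bigOr]
    by_cases hv : v p
    · exact ⟨FormLI.atom p, h1, hv⟩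
    · exact ⟨FormLI.natom p, h2, hv⟩
  by_cases hsub : ∃ sub : List (Set Agt × FormLI Agt AP),
      sub ≠ [] ∧ sub.Pairwise (fun x y => x.1 ∩ y.1 = ∅) ∧
      (∀ q ∈ sub, FormLI.box q.1 q.2 ∈ c) ∧
      (∀ (M : CGM Agt AP) (t : M.St), ∃ q ∈ sub, satLI M t q.2)
  · obtain ⟨sub, hne, hpw, hsubc, hpv⟩ := hsub
    obtain ⟨q0, l, rfl⟩ : ∃ q0 l, sub = q0 :: l := by
      cases sub with
      | nil => exact absurd rfl hne
      | cons q0 l => exact ⟨q0, l, rfl⟩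
    have hd1 : 1 ≤ d := by
      have := (hshape _ (hsubc q0 (by simp))).2
      simp [mdepth] at this
      omega
    -- the inner disjunction is valid and of smaller depth
    have hvΨ : validLI (bigOr1 q0.2 (l.map Prod.snd)) := by
      intro M t
      rw [sat_bigOr1]
      obtain ⟨q, hq, hsq⟩ := hpv M t
      refine ⟨q.2, ?_, hsq⟩
      rcases List.mem_cons.mp hq with rfl | hq
      · simp
      · simp only [List.mem_cons, List.mem_map]
        exact Or.inr ⟨q, hq, rfl⟩
    have hdΨ : mdepth (bigOr1 q0.2 (l.map Prod.snd)) < d := by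
      have hb : ∀ ρ ∈ q0.2 :: l.map Prod.snd, mdepth ρ ≤ d - 1 := by
        intro ρ hρ
        have : ∃ q ∈ q0 :: l, ρ = q.2 := by
          rcases List.mem_cons.mp hρ with rfl | hρ
          · exact ⟨q0, by simp⟩
          · obtain ⟨q, hq, rfl⟩ := List.mem_map.mp hρ
            exact ⟨q, by simp [hq], rfl⟩
        obtain ⟨q, hq, rfl⟩ := this
        have := (hshape _ (hsubc q hq)).2
        simp [mdepth] at this
        omega
      have := mdepth_bigOr1 q0.2 (l.map Prod.snd) hb
      omega
    have hder : DerLI (bigOr1 q0.2 (l.map Prod.snd)) := IH _ hdΨ hvΨ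
    have hbox : DerLI (FormLI.box (unionList (q0 :: l)) (bigOr1 q0.2 (l.map Prod.snd))) :=
      DerLI.r2 _ _ hder
    have hstart : DerLI (FormLI.or (FormLI.box (q0.1 ∪ unionList l)
        (bigOr1 q0.2 (l.map Prod.snd))) FormLI.bot) := by
      apply derOf hbox
      intro v w hev
      exact Or.inl hev
    have hchain := chain_derive l q0 FormLI.bot hpw hstart
    apply derOf hchain
    intro v w hev
    rw [eval_foldrBox] at hev
    rcases hev with ⟨q, hq, hw⟩ | hfalse
    · rw [eval_bigOr]
      exact ⟨FormLI.box q.1 q.2, hsubc q hq, hw⟩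
    · exact absurd hfalse (by simp [evalLI])
  · exfalso
    apply clause_countermodel c htaut (fun ρ hρ => (hshape ρ hρ).1) _ hval
    intro sub hpw hsubc
    rcases List.eq_nil_or_concat sub with rfl | _
    · exact ⟨trivPre.toCGM, PUnit.unit, by simp⟩
    · by_contra hcon
      push_neg at hcon
      apply hsub
      refine ⟨sub, ?_, hpw, hsubc, ?_⟩
      · rintro rfl; simp at *
      · intro M t
        obtain ⟨q, hq, hsq⟩ := hcon M t
        exact ⟨q, hq, hsq⟩

theorem completeness_aux :
    ∀ (d : ℕ) (ψ : FormLI Agt AP), mdepth ψ ≤ d → validLI ψ → DerLI ψ := by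
  intro d
  induction d using Nat.strong_induction_on with
  | _ d IH =>
    intro ψ hd hval
    have IH' : ∀ χ : FormLI Agt AP, mdepth χ < d → validLI χ → DerLI χ := by
      intro χ hχ hv
      exact IH (mdepth χ) (lt_of_lt_of_le hχ (le_refl d) |>.trans_le (le_refl d)) χ le_rfl hv
    have hclause : ∀ cl ∈ cnf ψ, DerLI (bigOrLI cl) := by
      intro cl hcl
      apply clause_case d IH' cl
      · intro ρ hρ
        obtain ⟨hs, hdep⟩ := cnf_shape ψ cl hcl ρ hρ
        exact ⟨hs, le_trans hdep hd⟩
      · intro M s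
        have hsψ := hval M s
        rw [sat_eval, cnf_eval] at hsψ
        obtain ⟨ρ, hρ, hev⟩ := hsψ cl hcl
        rw [sat_bigOr]
        exact ⟨ρ, hρ, (sat_eval ρ).mpr hev⟩
    apply DerLI.r1 ((cnf ψ).map bigOrLI) ψ
    · intro γ hγ
      obtain ⟨cl, hcl, rfl⟩ := List.mem_map.mp hγ
      exact hclause cl hcl
    · intro v w hΓ
      rw [cnf_eval]
      intro cl hcl
      have := hΓ (bigOrLI cl) (List.mem_map_of_mem hcl)
      rwa [eval_bigOr] at this

end Main
/-- Completeness of CL_LI: every valid formula of Φ_CL_LI is derivable. -/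
theorem completeness_CL_LI
    {Agt AP : Type} [Fintype Agt] [Nonempty Agt] [Countable AP]
    (φ : FormLI Agt AP) (h : validLI φ) : DerLI φ := by
  exact completeness_aux (mdepth φ) φ le_rfl h
end
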